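/- Let ψ(t) = Q(t) − t = (3t + 2√((1−t)³) − t³ − 2)/t² on (0,1). Then ψ is strictly decreasing on (0,1), and for (√5 − 1)/2 < t < 1, ψ(t) > (1−t)^{3/2}. -/
import Mathlib


open Real

/-- `ψ t = Q t - t = (3t + 2√((1-t)³) - t³ - 2)/t²`. -/
noncomputable def ψ (t : ℝ) : ℝ := (3 * t + 2 * Real.sqrt ((1 - t)^3) - t^3 - 2) / t^2

lemma psi_eq (t : ℝ) (ht0 : 0 < t) (ht1 : t < 1) :
    ψ t = (Real.sqrt (1 - t))^3 * (Real.sqrt (1 - t) + 2) / (1 + Real.sqrt (1 - t))^2 := by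
  set u := Real.sqrt (1 - t) with hu
  have h1t : (0:ℝ) ≤ 1 - t := by linarith
  have hu2 : u^2 = 1 - t := Real.sq_sqrt h1t
  have hun : 0 ≤ u := Real.sqrt_nonneg _
  have hu1 : u < 1 := by
    nlinarith [hu2]
  have hs : Real.sqrt ((1 - t)^3) = u^3 := by
    rw [← hu2]
    rw [show (u^2)^3 = (u^3)^2 by ring]
    exact Real.sqrt_sq (by positivity)
  unfold ψ
  rw [hs]
  have ht : t = 1 - u^2 := by linarith [hu2]
  rw [ht]
  have h1 : (1 : ℝ) - u ≠ 0 := by nlinarith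
  have h2 : (1 : ℝ) + u ≠ 0 := by nlinarith
  have h3 : (1 : ℝ) - u^2 ≠ 0 := by nlinarith
  field_simp
  ring

theorem psi_strictAnti_and_bound :
    StrictAntiOn ψ (Set.Ioo (0:ℝ) 1) ∧
    ∀ t : ℝ, (Real.sqrt 5 - 1) / 2 < t → t < 1 → ψ t > (1 - t) ^ ((3:ℝ)/2) := by
  constructor
  · intro a ha b hb hab
    obtain ⟨ha0, ha1⟩ := ha
    obtain ⟨hb0, hb1⟩ := hb
    rw [psi_eq a ha0 ha1, psi_eq b hb0 hb1]
    set x := Real.sqrt (1 - a)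
    set y := Real.sqrt (1 - b)
    have hx2 : x^2 = 1 - a := Real.sq_sqrt (by linarith)
    have hy2 : y^2 = 1 - b := Real.sq_sqrt (by linarith)
    have hxn : 0 ≤ x := Real.sqrt_nonneg _
    have hyn : 0 ≤ y := Real.sqrt_nonneg _
    have hy0 : 0 < y := Real.sqrt_pos.mpr (by linarith)
    have hxy : y < x := by nlinarith
    rw [div_lt_div_iff₀ (by positivity) (by positivity)]
    have hD : x^3*(x+2)*(1+y)^2 - y^3*(y+2)*(1+x)^2 =
        (x^4-y^4) + 2*(x^3-y^3) + x^2*y^2*(x^2-y^2) + 2*x^2*y^2*(x-y)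
          + 2*x*y*(x^3-y^3) + 4*x*y*(x^2-y^2) := by ring
    have p4 : y^4 < x^4 := pow_lt_pow_left₀ hxy hyn (by norm_num)
    have p3 : y^3 < x^3 := pow_lt_pow_left₀ hxy hyn (by norm_num)
    have p2 : y^2 < x^2 := pow_lt_pow_left₀ hxy hyn (by norm_num)
    have hxyn : 0 ≤ x*y := mul_nonneg hxn hyn
    nlinarith [mul_nonneg (mul_nonneg hxyn hxyn) (sub_nonneg.mpr hxy.le),
      mul_nonneg (mul_nonneg hxyn hxyn) (sub_nonneg.mpr p2.le),
      mul_nonneg hxyn (sub_nonneg.mpr p3.le),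
      mul_nonneg hxyn (sub_nonneg.mpr p2.le)]
  · intro t ht0 ht1
    have h5 : Real.sqrt 5 ^ 2 = 5 := Real.sq_sqrt (by norm_num)
    have h5p : 1 < Real.sqrt 5 := by nlinarith [Real.sqrt_nonneg 5]
    have ht0' : 0 < t := by linarith
    rw [psi_eq t ht0' ht1]
    set u := Real.sqrt (1 - t) with hu
    have hu2 : u^2 = 1 - t := Real.sq_sqrt (by linarith)
    have hun : 0 ≤ u := Real.sqrt_nonneg _
    have hup : 0 < u := Real.sqrt_pos.mpr (by linarith)
    have hub : u < (Real.sqrt 5 - 1) / 2 := by nlinarith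
    have hkey : u + u^2 < 1 := by nlinarith
    have hrw : (1 - t) ^ ((3:ℝ)/2) = u^3 := by
      have hs : (1 - t) ^ ((3:ℝ)/2) = Real.sqrt ((1 - t)^3) := by
        rw [Real.sqrt_eq_rpow, ← Real.rpow_natCast (1-t) 3, ← Real.rpow_mul (by linarith)]
        norm_num
      rw [hs, ← hu2, show ((u^2)^3 : ℝ) = (u^3)^2 by ring]
      exact Real.sqrt_sq (by positivity)
    rw [hrw, gt_iff_lt, lt_div_iff₀ (by positivity)]
    nlinarith [pow_pos hup 3]
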